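/- Let s ∈ ℚ with 2s ∉ ℤ, and let η ∈ ℝ be either transcendental over ℚ or algebraic over ℚ of degree at least 5. If A ⊆ ℝ² is a set such that every element α ∈ Δ(A) satisfies α² = (k + s)² + η for some k ∈ ℕ, then A has at most 3 elements. -/

import Mathlib

/-!
Among four points of the plane, the three difference vectors from one of them are linearly
dependent, so their Gram matrix `G` is singular. Since
`2⟪x - z, y - z⟫ = |x - z|² + |y - z|² - |x - y|²` and every squared distance is `η` plus a
rational, `2G = η (I + J) + B` with `J` the all-ones matrix and `B` rational. So `η` is a root of
the rational polynomial `det (X (I + J) + B)`, of degree at most `3` and with cubic coefficient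
`det (I + J) = 4`, which rules out transcendental `η` and `η` of degree at least `4`.
The same argument bounds such sets by `d + 1` points in dimension `d`.
-/

open Polynomial Matrix

lemma le_natDegree_of_aeval_eq_zero {K L : Type*} [Field K] [Ring L] [Algebra K L] {η : L}
    {n : ℕ} (hη : Transcendental K η ∨ n ≤ (minpoly K η).natDegree) {p : K[X]} (hp : p ≠ 0)
    (hroot : aeval η p = 0) : n ≤ p.natDegree := by
  rcases hη with htr | hn
  · exact absurd ⟨p, hp, hroot⟩ htr
  · exact hn.trans (natDegree_le_of_dvd (minpoly.dvd K η hroot) hp)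

lemma exists_aeval_eq_zero_of_det_smul_add_eq_zero {K L ι : Type*} [CommRing K] [CommRing L]
    [Algebra K L] [Fintype ι] [DecidableEq ι] {A B : Matrix ι ι K} (hA : A.det ≠ 0) {η : L}
    (h : (η • A.map (algebraMap K L) + B.map (algebraMap K L)).det = 0) :
    ∃ p : K[X], p ≠ 0 ∧ p.natDegree ≤ Fintype.card ι ∧ aeval η p = 0 := by
  refine ⟨(X • A.map C + B.map C).det, fun h0 => hA ?_, natDegree_det_X_add_C_le A B, ?_⟩
  · rw [← coeff_det_X_add_C_card A B, h0, coeff_zero]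
  · rw [← h, AlgHom.map_det]
    congr 1
    ext i j
    simp [Algebra.commutes]

lemma det_one_add_const_one {R ι : Type*} [CommRing R] [Fintype ι] [DecidableEq ι] :
    (1 + of fun _ _ : ι => (1 : R)).det = 1 + Fintype.card ι := by
  have hJ : (of fun _ _ : ι => (1 : R)) =
      (replicateCol Unit (1 : ι → R) * replicateRow Unit (1 : ι → R) : Matrix ι ι R) := by
    ext i j
    simp [Matrix.mul_apply]
  rw [hJ, det_one_add_replicateCol_mul_replicateRow]
  simp

lemma det_gram_eq_zero_of_finrank_lt {𝕜 E ι : Type*} [RCLike 𝕜] [NormedAddCommGroup E]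
    [InnerProductSpace 𝕜 E] [FiniteDimensional 𝕜 E] [Fintype ι] [DecidableEq ι] (v : ι → E)
    (h : Module.finrank 𝕜 E < Fintype.card ι) : (gram 𝕜 v).det = 0 := by
  by_contra hdet
  exact (linearIndependent_of_det_gram_ne_zero hdet).fintype_card_le_finrank.not_gt h

section Euclidean

variable {E : Type*} [NormedAddCommGroup E] [InnerProductSpace ℝ E]

lemma two_mul_inner_sub_sub (x y z : E) :
    2 * inner ℝ (x - z) (y - z) = dist x z ^ 2 + dist y z ^ 2 - dist x y ^ 2 := by
  have h := norm_sub_sq_real (x - z) (y - z)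
  rw [sub_sub_sub_cancel_right] at h
  rw [dist_eq_norm, dist_eq_norm, dist_eq_norm]
  linarith

variable [FiniteDimensional ℝ E]

theorem exists_aeval_eq_zero_of_sq_dist_eq_rat_add {η : ℝ} {S : Finset E}
    (hcard : S.card = Module.finrank ℝ E + 2)
    (hS : ∀ a ∈ S, ∀ b ∈ S, a ≠ b → ∃ q : ℚ, dist a b ^ 2 = q + η) :
    ∃ p : ℚ[X], p ≠ 0 ∧ p.natDegree ≤ Module.finrank ℝ E + 1 ∧ aeval η p = 0 := by
  classical
  obtain ⟨x₀, hx₀⟩ : S.Nonempty := Finset.card_pos.mp (by omega)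
  have hι : Fintype.card (S.erase x₀) = Module.finrank ℝ E + 1 := by
    simp [Finset.card_erase_of_mem hx₀, hcard]
  let v : S.erase x₀ → E := fun y => y - x₀
  let J : Matrix (S.erase x₀) (S.erase x₀) ℚ := 1 + of fun _ _ => 1
  have hentry : ∀ i j, ∃ q : ℚ, 2 * gram ℝ v i j = η * J i j + q := by
    rintro ⟨i, hi⟩ ⟨j, hj⟩
    obtain ⟨hi₀, hiS⟩ := Finset.mem_erase.mp hi
    obtain ⟨hj₀, hjS⟩ := Finset.mem_erase.mp hj
    obtain ⟨qi, hqi⟩ := hS i hiS x₀ hx₀ hi₀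
    obtain ⟨qj, hqj⟩ := hS j hjS x₀ hx₀ hj₀
    rw [gram_apply, two_mul_inner_sub_sub]
    by_cases hij : i = j
    · subst hij
      have hJ : J ⟨i, hi⟩ ⟨i, hj⟩ = 2 := by norm_num [J]
      exact ⟨qi + qj, by rw [hJ, dist_self]; push_cast; linear_combination hqi + hqj⟩
    · obtain ⟨qij, hqij⟩ := hS i hiS j hjS hij
      have hJ : J ⟨i, hi⟩ ⟨j, hj⟩ = 1 := by simp [J, hij]
      exact ⟨qi + qj - qij, by rw [hJ]; push_cast; linear_combination hqi + hqj - hqij⟩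
  choose B hB using hentry
  have hJ : J.det ≠ 0 := by
    rw [det_one_add_const_one]
    positivity
  have hsing : (η • J.map (algebraMap ℚ ℝ) + (of B).map (algebraMap ℚ ℝ)).det = 0 := by
    have h2G : η • J.map (algebraMap ℚ ℝ) + (of B).map (algebraMap ℚ ℝ) = (2 : ℝ) • gram ℝ v := by
      ext i j
      simpa using (hB i j).symm
    rw [h2G, det_smul, det_gram_eq_zero_of_finrank_lt v (by omega), mul_zero]
  obtain ⟨p, hp0, hpdeg, hp⟩ := exists_aeval_eq_zero_of_det_smul_add_eq_zero hJ hsing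
  exact ⟨p, hp0, hι ▸ hpdeg, hp⟩

theorem encard_le_of_sq_dist_eq_rat_add {η : ℝ}
    (hη : Transcendental ℚ η ∨ Module.finrank ℝ E + 2 ≤ (minpoly ℚ η).natDegree) {A : Set E}
    (hA : ∀ a ∈ A, ∀ b ∈ A, a ≠ b → ∃ q : ℚ, dist a b ^ 2 = q + η) :
    A.encard ≤ Module.finrank ℝ E + 1 := by
  by_contra! hlt
  obtain ⟨t, htA, htcard⟩ := Set.exists_subset_encard_eq (Order.add_one_le_of_lt hlt)
  have htfin : t.Finite := Set.finite_of_encard_eq_coe htcard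
  have hcard : htfin.toFinset.card = Module.finrank ℝ E + 2 := by
    have h := htfin.encard_eq_coe_toFinset_card
    rw [htcard] at h
    exact_mod_cast h.symm
  obtain ⟨p, hp0, hpdeg, hp⟩ := exists_aeval_eq_zero_of_sq_dist_eq_rat_add hcard
    fun a ha b hb => hA a (htA (by simpa using ha)) b (htA (by simpa using hb))
  have := le_natDegree_of_aeval_eq_zero hη hp0 hp
  omega

end Euclidean

theorem distance_set_perturbed_general (s : ℚ) (η : ℝ)
    (hη : Transcendental ℚ η ∨ (IsAlgebraic ℚ η ∧ 5 ≤ (minpoly ℚ η).natDegree))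
    (A : Set (EuclideanSpace ℝ (Fin 2)))
    (hA : ∀ a ∈ A, ∀ a' ∈ A, a ≠ a' →
      ∃ k : ℕ, (dist a a') ^ 2 = ((k : ℝ) + (s : ℝ)) ^ 2 + η) :
    A.Finite ∧ A.ncard ≤ 3 := by
  have hdim : Module.finrank ℝ (EuclideanSpace ℝ (Fin 2)) = 2 := finrank_euclideanSpace_fin
  have hA' : ∀ a ∈ A, ∀ b ∈ A, a ≠ b → ∃ q : ℚ, dist a b ^ 2 = q + η := by
    intro a ha b hb hab
    obtain ⟨k, hk⟩ := hA a ha b hb hab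
    exact ⟨((k : ℚ) + s) ^ 2, by rw [hk]; push_cast; ring⟩
  rw [← Set.encard_le_coe_iff_finite_ncard_le]
  have hle := encard_le_of_sq_dist_eq_rat_add (hη.imp_right fun h => by omega) hA'
  rwa [hdim] at hle

/-- **Perturbed shifted Erdős–Solymosi theorem.**
Let `s ∈ ℚ` with `2s ∉ ℤ` and let `η` be transcendental over `ℚ`, or algebraic
over `ℚ` of degree at least 5. If each distance `α` between distinct points of
`A ⊆ ℝ²` satisfies `α² = (k + s)² + η` for some `k ∈ ℕ`, then `A` has at most
3 elements. -/
theorem distance_set_perturbed (s : ℚ) (hs : ∀ m : ℤ, 2 * s ≠ (m : ℚ)) (η : ℝ)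
    (hη : Transcendental ℚ η ∨ (IsAlgebraic ℚ η ∧ 5 ≤ (minpoly ℚ η).natDegree))
    (A : Set (EuclideanSpace ℝ (Fin 2)))
    (hA : ∀ a ∈ A, ∀ a' ∈ A, a ≠ a' →
      ∃ k : ℕ, (dist a a') ^ 2 = ((k : ℝ) + (s : ℝ)) ^ 2 + η) :
    A.Finite ∧ A.ncard ≤ 3 :=
  distance_set_perturbed_general s η hη A hA
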